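/- arXiv:2212.05050 — 4 statements merged into one kernel-verified Lean document; each statement's English description precedes it below -/
import Mathlib

section
/- If a hypothesis class H of binary functions on a domain X contains a half-graph of length 2^{d+1} (i.e., there exist x_1,...,x_{2^{d+1}} in X and h_1,...,h_{2^{d+1}} in H with h_j(x_i)=1 iff i<j), then H shatters a Littlestone tree of depth d. -/
/-- A hypothesis class `H` shatters a Littlestone (mistake) tree of depth `d`. -/
def ShattersTree {X : Type*} (H : Set (X → Bool)) (d : ℕ) : Prop :=
  ∃ x : (k : Fin d) → (Fin k.1 → Bool) → X,
    ∀ ρ : Fin d → Bool, ∃ h ∈ H,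
      ∀ k : Fin d, h (x k (fun j => ρ ⟨j.1, j.2.trans k.2⟩)) = ρ k

/-- A half-graph of length `k` in `H`: points `x i` and hypotheses `h j` in `H`
with `h j (x i) = 1` iff `i < j`. -/
def HalfGraph {X : Type*} (H : Set (X → Bool)) (k : ℕ) : Prop :=
  ∃ (x : Fin k → X) (h : Fin k → X → Bool),
    (∀ j, h j ∈ H) ∧ ∀ i j : Fin k, (h j (x i) = true ↔ (i : ℕ) < (j : ℕ))

lemma sumpow (d : ℕ) : ∀ k, k ≤ d + 1 →
    (∑ i ∈ Finset.range k, 2^(d-i)) = 2^(d+1) - 2^(d+1-k) := by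
  intro k
  induction k with
  | zero => simp
  | succ n ih =>
    intro hk
    rw [Finset.sum_range_succ, ih (by omega)]
    have h1 : 2^(d+1-n) = 2 * 2^(d-n) := by
      have h : d + 1 - n = (d - n) + 1 := by omega
      rw [h, pow_succ]; ring
    have h2 : d + 1 - (n+1) = d - n := by omega
    have h3 : 2^(d+1-n) ≤ 2^(d+1) := Nat.pow_le_pow_right (by norm_num) (by omega)
    rw [h2]
    omega

lemma node_lt (d k : ℕ) (hk : k < d) (b : Fin k → Bool) :
    (∑ i : Fin k, cond (b i) (2^(d - i.1)) 0) + 2^(d - k) < 2^(d+1) := by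
  have hle : (∑ i : Fin k, cond (b i) (2^(d - i.1)) 0) ≤ ∑ i : Fin k, 2^(d - i.1) := by
    apply Finset.sum_le_sum
    intro i _
    cases b i <;> simp
  have he : (∑ i : Fin k, 2^(d - i.1)) = 2^(d+1) - 2^(d+1-k) := by
    rw [Fin.sum_univ_eq_sum_range (fun i => 2^(d-i)) k]
    exact sumpow d k (by omega)
  have h1 : 2^(d+1-k) = 2 * 2^(d-k) := by
    have h : d + 1 - k = (d - k) + 1 := by omega
    rw [h, pow_succ]; ring
  have h3 : 2^(d+1-k) ≤ 2^(d+1) := Nat.pow_le_pow_right (by norm_num) (by omega)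
  have h4 : 1 ≤ 2^(d-k) := Nat.one_le_two_pow
  omega

set_option maxRecDepth 8000 in
/-- If `H` contains a half-graph of length `2^(d+1)`, then `H` shatters a
Littlestone tree of depth `d`. -/
theorem halfGraph_to_tree {X : Type*} (H : Set (X → Bool)) (d : ℕ)
    (hhg : HalfGraph H (2 ^ (d + 1))) : ShattersTree H d := by
  obtain ⟨x, h, hH, hspec⟩ := hhg
  refine ⟨fun k b => x ⟨(∑ i : Fin k.1, cond (b i) (2^(d - i.1)) 0) + 2^(d - k.1),
    node_lt d k.1 k.2 b⟩, fun ρ => ?_⟩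
  set c : ℕ → ℕ := fun i => if hi : i < d then (cond (ρ ⟨i, hi⟩) (2^(d-i)) 0) else 0 with hc
  set L : ℕ → ℕ := fun k => ∑ i ∈ Finset.range k, c i with hL
  have hcle : ∀ i, c i ≤ 2^(d-i) := by
    intro i
    simp only [hc]
    split
    · rename_i hi
      cases ρ ⟨i, hi⟩ <;> simp
    · positivity
  have hLd : L d ≤ 2^(d+1) - 2 := by
    have h1 : L d ≤ ∑ i ∈ Finset.range d, 2^(d-i) :=
      Finset.sum_le_sum (fun i _ => hcle i)
    have h2 : (∑ i ∈ Finset.range d, 2^(d-i)) = 2^(d+1) - 2^(d+1-d) :=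
      sumpow d d (by omega)
    have h3 : d + 1 - d = 1 := by omega
    rw [h2, h3] at h1
    simpa using h1
  have h2le : (2:ℕ) ≤ 2^(d+1) := by
    calc (2:ℕ) = 2^1 := rfl
    _ ≤ 2^(d+1) := Nat.pow_le_pow_right (by norm_num) (by omega)
  have hjlt : L d + 1 < 2^(d+1) := by omega
  refine ⟨h ⟨L d + 1, hjlt⟩, hH _, fun k => ?_⟩
  have hsum : (∑ i : Fin k.1, cond (ρ ⟨i.1, i.2.trans k.2⟩) (2^(d - i.1)) 0) = L k.1 := by
    show _ = ∑ i ∈ Finset.range k.1, c i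
    rw [← Fin.sum_univ_eq_sum_range c k.1]
    apply Finset.sum_congr rfl
    intro i _
    simp only [hc]
    rw [dif_pos (i.2.trans k.2)]
  have hmono : ∀ a b : ℕ, a ≤ b → L a ≤ L b := by
    intro a b hab
    apply Finset.sum_le_sum_of_subset
    exact Finset.range_subset_range.mpr hab
  have hLsucc : L (k.1 + 1) = L k.1 + c k.1 := Finset.sum_range_succ c k.1
  have hick : c k.1 = cond (ρ k) (2^(d-k.1)) 0 := by
    simp only [hc]
    rw [dif_pos k.2]
  have hIco : L d ≤ L (k.1+1) + (2^(d-k.1) - 2) := by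
    have hsplit : (∑ i ∈ Finset.Ico 0 (k.1+1), c i) + (∑ i ∈ Finset.Ico (k.1+1) d, c i)
        = ∑ i ∈ Finset.Ico 0 d, c i :=
      Finset.sum_Ico_consecutive c (by omega) (by omega)
    have htail : (∑ i ∈ Finset.Ico (k.1+1) d, c i) ≤ ∑ i ∈ Finset.Ico (k.1+1) d, 2^(d-i) :=
      Finset.sum_le_sum (fun i _ => hcle i)
    have hsplit2 : (∑ i ∈ Finset.Ico 0 (k.1+1), 2^(d-i)) + (∑ i ∈ Finset.Ico (k.1+1) d, 2^(d-i))
        = ∑ i ∈ Finset.Ico 0 d, 2^(d-i) :=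
      Finset.sum_Ico_consecutive (fun i => 2^(d-i)) (by omega) (by omega)
    have e1 : (∑ i ∈ Finset.Ico 0 (k.1+1), 2^(d-i)) = 2^(d+1) - 2^(d-k.1) := by
      rw [← Finset.range_eq_Ico, sumpow d (k.1+1) (by omega)]
      congr 2
      omega
    have e2 : (∑ i ∈ Finset.Ico 0 d, 2^(d-i)) = 2^(d+1) - 2 := by
      rw [← Finset.range_eq_Ico, sumpow d d (by omega)]
      have h : d + 1 - d = 1 := by omega
      rw [h, pow_one]
    have e5 : 2^(d-k.1) ≤ 2^(d+1) := Nat.pow_le_pow_right (by norm_num) (by omega)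
    have hL0 : L (k.1+1) = ∑ i ∈ Finset.Ico 0 (k.1+1), c i := by
      show (∑ i ∈ Finset.range (k.1+1), c i) = _
      rw [Finset.range_eq_Ico]
    have hLd0 : L d = ∑ i ∈ Finset.Ico 0 d, c i := by
      show (∑ i ∈ Finset.range d, c i) = _
      rw [Finset.range_eq_Ico]
    have e7 : (2:ℕ) ≤ 2^(d-k.1) := by
      calc (2:ℕ) = 2^1 := rfl
      _ ≤ 2^(d-k.1) := Nat.pow_le_pow_right (by norm_num) (by omega)
    omega
  have h2k : (2:ℕ) ≤ 2^(d-k.1) := by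
    calc (2:ℕ) = 2^1 := rfl
    _ ≤ 2^(d-k.1) := Nat.pow_le_pow_right (by norm_num) (by omega)
  have key := hspec ⟨(∑ i : Fin k.1, cond (ρ ⟨i.1, i.2.trans k.2⟩) (2^(d - i.1)) 0) + 2^(d - k.1),
      node_lt d k.1 k.2 _⟩ ⟨L d + 1, hjlt⟩
  simp only at key ⊢
  cases hρ : ρ k with
  | true =>
    rw [key]
    simp only [hsum]
    rw [hρ] at hick
    simp only [cond_true] at hick
    have := hmono (k.1+1) d k.2
    omega
  | false =>
    rw [Bool.eq_false_iff]
    intro htrue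
    rw [key] at htrue
    simp only [hsum] at htrue
    rw [hρ] at hick
    simp only [cond_false] at hick
    omega
end

section
/- If a hypothesis class H shatters a Littlestone tree of depth 2^{k}, then H contains a half-graph of length k (there exist x_1,...,x_k ∈ X and h_1,...,h_k ∈ H with h_j(x_i)=1 iff i<j). -/
namespace TreeToHalfGraph

variable {X : Type*}

/-- Shattering of depth `D` by class `G`, with all node points satisfying `P`. -/
def ShatP (P : X → Prop) : ℕ → Set (X → Bool) → Prop
  | 0, G => G.Nonempty
  | D + 1, G => ∃ x, P x ∧ ShatP P D {h ∈ G | h x = false} ∧ ShatP P D {h ∈ G | h x = true}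

lemma shatP_succ_iff {P : X → Prop} {D : ℕ} {G : Set (X → Bool)} :
    ShatP P (D + 1) G ↔
      ∃ x, P x ∧ ShatP P D {h ∈ G | h x = false} ∧ ShatP P D {h ∈ G | h x = true} := Iff.rfl

lemma shatP_nonempty {P : X → Prop} :
    ∀ {D : ℕ} {G : Set (X → Bool)}, ShatP P D G → G.Nonempty := by
  intro D
  induction D with
  | zero => intro G h; exact h
  | succ D IH =>
    rintro G ⟨x, -, h0, -⟩
    obtain ⟨g, hg⟩ := IH h0
    exact ⟨g, hg.1⟩

lemma shatP_mono_set {P : X → Prop} :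
    ∀ {D : ℕ} {G G' : Set (X → Bool)}, G ⊆ G' → ShatP P D G → ShatP P D G' := by
  intro D
  induction D with
  | zero => intro G G' hs h; exact h.mono hs
  | succ D IH =>
    rintro G G' hs ⟨x, hx, h0, h1⟩
    exact ⟨x, hx, IH (fun h hh => ⟨hs hh.1, hh.2⟩) h0, IH (fun h hh => ⟨hs hh.1, hh.2⟩) h1⟩

lemma shatP_pred {P : X → Prop} :
    ∀ {D : ℕ} {G : Set (X → Bool)}, ShatP P (D + 1) G → ShatP P D G := by
  intro D
  induction D with
  | zero =>
    rintro G ⟨x, -, h0, -⟩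
    obtain ⟨g, hg⟩ := shatP_nonempty h0
    exact ⟨g, hg.1⟩
  | succ D IH =>
    rintro G ⟨x, hx, h0, h1⟩
    exact ⟨x, hx, IH h0, IH h1⟩

lemma shatP_of_le {P : X → Prop} {D' D : ℕ} (hle : D' ≤ D) {G : Set (X → Bool)}
    (h : ShatP P D G) : ShatP P D' G := by
  obtain ⟨e, rfl⟩ := Nat.exists_eq_add_of_le hle
  clear hle
  revert h
  induction e with
  | zero => exact fun h => h
  | succ e IH => exact fun h => IH (shatP_pred h)

/-- The split lemma: coloring a shattered tree by any hypothesis `γ` yields a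
monochromatic shattered subtree, with the two depths adding up. -/
lemma shatP_split {P : X → Prop} :
    ∀ (D : ℕ) (G : Set (X → Bool)) (α β : ℕ), α + β = D → ShatP P D G → ∀ γ : X → Bool,
      ShatP (fun y => P y ∧ γ y = false) α G ∨ ShatP (fun y => P y ∧ γ y = true) β G := by
  intro D
  induction D with
  | zero =>
    intro G α β hab hS γ
    have hα : α = 0 := by omega
    subst hα
    exact Or.inl hS
  | succ D IH =>
    intro G α β hab hS γ
    obtain ⟨x, hPx, h0, h1⟩ := hS
    have hGne : G.Nonempty := by
      obtain ⟨g, hg⟩ := shatP_nonempty h0; exact ⟨g, hg.1⟩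
    cases hγ : γ x with
    | false =>
      cases α with
      | zero => exact Or.inl hGne
      | succ α' =>
        have hab' : α' + β = D := by omega
        rcases IH _ α' β hab' h0 γ with L0 | R0
        · rcases IH _ α' β hab' h1 γ with L1 | R1
          · exact Or.inl ⟨x, ⟨hPx, hγ⟩, L0, L1⟩
          · exact Or.inr (shatP_mono_set (fun h hh => hh.1) R1)
        · exact Or.inr (shatP_mono_set (fun h hh => hh.1) R0)
    | true =>
      cases β with
      | zero => exact Or.inr hGne
      | succ β' =>
        have hab' : α + β' = D := by omega
        rcases IH _ α β' hab' h0 γ with L0 | R0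
        · exact Or.inl (shatP_mono_set (fun h hh => hh.1) L0)
        · rcases IH _ α β' hab' h1 γ with L1 | R1
          · exact Or.inl (shatP_mono_set (fun h hh => hh.1) L1)
          · exact Or.inr ⟨x, ⟨hPx, hγ⟩, R0, R1⟩

lemma tree_to_shatP :
    ∀ (d : ℕ) (H : Set (X → Bool)) (x : (k : Fin d) → (Fin k.1 → Bool) → X),
      (∀ ρ : Fin d → Bool, ∃ h ∈ H,
        ∀ k : Fin d, h (x k (fun j => ρ ⟨j.1, j.2.trans k.2⟩)) = ρ k) →
      ShatP (fun _ : X => True) d H := by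
  intro d
  induction d with
  | zero =>
    intro H x hw
    obtain ⟨h, hH, -⟩ := hw (fun j => j.elim0)
    exact ⟨h, hH⟩
  | succ d IH =>
    intro H x hw
    have key : ∀ b : Bool,
        ShatP (fun _ : X => True) d {h ∈ H | h (x ⟨0, Nat.succ_pos d⟩ Fin.elim0) = b} := by
      intro b
      refine IH _ (fun k σ =>
        x ⟨k.1 + 1, Nat.succ_lt_succ k.2⟩
          (fun j => if hj : j.1 = 0 then b else σ ⟨j.1 - 1, by have hlt : j.1 < k.1 + 1 := j.2; omega⟩)) ?_
      intro σ
      set ρ : Fin (d + 1) → Bool :=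
        fun j => if hj : j.1 = 0 then b else σ ⟨j.1 - 1, by have := j.2; omega⟩ with hρ
      obtain ⟨h, hH, hval⟩ := hw ρ
      refine ⟨h, ⟨hH, ?_⟩, ?_⟩
      · have h0 := hval ⟨0, Nat.succ_pos d⟩
        have hρ0 : ρ ⟨0, Nat.succ_pos d⟩ = b := by simp [hρ]
        rw [hρ0] at h0
        convert h0 using 3
      · intro k
        have hval' := hval ⟨k.1 + 1, Nat.succ_lt_succ k.2⟩
        have hρk : ρ ⟨k.1 + 1, Nat.succ_lt_succ k.2⟩ = σ k := by simp [hρ]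
        rw [hρk] at hval'
        convert hval' using 3
    exact ⟨x ⟨0, Nat.succ_pos d⟩ Fin.elim0, trivial, key false, key true⟩

/-- Main induction: from a shattered tree of depth `2^(m+1) - 2`, extract the
"block" structure consisting of `c` strict chronological pairs, `v` nonstrict
reverse pairs, and a final row `e`. -/
lemma main_blk :
    ∀ (m : ℕ) (G : Set (X → Bool)) (P : X → Prop),
      ShatP P (2 ^ (m + 1) - 2) G →
      ∃ c v : ℕ, c + v = m ∧
      ∃ (p : Fin c → X) (R : Fin c → X → Bool) (q : Fin v → X) (S : Fin v → X → Bool)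
        (e : X → Bool),
        (∀ j, R j ∈ G) ∧ (∀ w, S w ∈ G) ∧ e ∈ G ∧
        (∀ i, P (p i)) ∧ (∀ u, P (q u)) ∧
        (∀ j i, R j (p i) = decide (i.1 < j.1)) ∧
        (∀ j u, R j (q u) = false) ∧
        (∀ w i, S w (p i) = true) ∧
        (∀ w u, S w (q u) = decide (w.1 ≤ u.1)) ∧
        (∀ i, e (p i) = true) ∧
        (∀ u, e (q u) = false) := by
  intro m
  induction m with
  | zero =>
    intro G P hS
    have h0 : (2 : ℕ) ^ (0 + 1) - 2 = 0 := by norm_num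
    rw [h0] at hS
    obtain ⟨e, he⟩ := (hS : G.Nonempty)
    exact ⟨0, 0, rfl, Fin.elim0, Fin.elim0, Fin.elim0, Fin.elim0, e,
      fun j => j.elim0, fun w => w.elim0, he, fun i => i.elim0, fun u => u.elim0,
      fun j => j.elim0, fun j => j.elim0, fun w => w.elim0, fun w => w.elim0,
      fun i => i.elim0, fun u => u.elim0⟩
  | succ m IH =>
    intro G P hS
    have h2 : (2 : ℕ) ≤ 2 ^ (m + 1) := by
      calc (2 : ℕ) = 2 ^ 1 := (pow_one 2).symm
      _ ≤ 2 ^ (m + 1) := Nat.pow_le_pow_right (by norm_num) (by omega)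
    have hpow : (2 : ℕ) ^ (m + 1 + 1) = 2 * 2 ^ (m + 1) := by rw [pow_succ]; ring
    have hsum : (2 ^ (m + 1) - 1) + (2 ^ (m + 1) - 1) = 2 ^ (m + 1 + 1) - 2 := by omega
    have hform : (2 : ℕ) ^ (m + 1) - 1 = (2 ^ (m + 1) - 2) + 1 := by omega
    obtain ⟨γ, hγG⟩ := shatP_nonempty hS
    rcases shatP_split _ G _ _ hsum hS γ with hL | hR
    · -- chronological (mono-0) step
      rw [hform, shatP_succ_iff] at hL
      obtain ⟨x, ⟨hPx, hγx⟩, -, hx1⟩ := hL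
      obtain ⟨c, v, hcv, p, R, q, S, e, hRG, hSG, heG, hPp, hPq, hRp, hRq, hSp, hSq, hep, heq⟩ :=
        IH {h ∈ G | h x = true} (fun y => P y ∧ γ y = false) hx1
      refine ⟨c + 1, v, by omega, Fin.cases x p, Fin.cases γ R, q, S, e,
        ?_, ?_, heG.1, ?_, ?_, ?_, ?_, ?_, ?_, ?_, ?_⟩
      · intro j
        induction j using Fin.cases with
        | zero => simpa using hγG
        | succ j => simpa using (hRG j).1
      · intro w; exact (hSG w).1
      · intro i
        induction i using Fin.cases with
        | zero => simpa using hPx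
        | succ i => simpa using (hPp i).1
      · intro u; exact (hPq u).1
      · intro j i
        induction j using Fin.cases with
        | zero =>
          induction i using Fin.cases with
          | zero => simp [hγx]
          | succ i => simp [(hPp i).2]
        | succ j =>
          induction i using Fin.cases with
          | zero => simp [(hRG j).2]
          | succ i =>
            simp only [Fin.cases_succ, Fin.val_succ]
            rw [hRp j i, decide_eq_decide]
            omega
      · intro j u
        induction j using Fin.cases with
        | zero => simpa using (hPq u).2
        | succ j => simpa using hRq j u
      · intro w i
        induction i using Fin.cases with
        | zero => simpa using (hSG w).2
        | succ i => simpa using hSp w i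
      · intro w u; exact hSq w u
      · intro i
        induction i using Fin.cases with
        | zero => simpa using heG.2
        | succ i => simpa using hep i
      · intro u; exact heq u
    · -- reverse (mono-1) step
      rw [hform, shatP_succ_iff] at hR
      obtain ⟨y, ⟨hPy, hγy⟩, hy0, -⟩ := hR
      obtain ⟨c, v, hcv, p, R, q, S, e, hRG, hSG, heG, hPp, hPq, hRp, hRq, hSp, hSq, hep, heq⟩ :=
        IH {h ∈ G | h y = false} (fun z => P z ∧ γ z = true) hy0
      refine ⟨c, v + 1, by omega, p, R, Fin.cases y q, Fin.cases γ S, e,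
        ?_, ?_, heG.1, ?_, ?_, ?_, ?_, ?_, ?_, ?_, ?_⟩
      · intro j; exact (hRG j).1
      · intro w
        induction w using Fin.cases with
        | zero => simpa using hγG
        | succ w => simpa using (hSG w).1
      · intro i; exact (hPp i).1
      · intro u
        induction u using Fin.cases with
        | zero => simpa using hPy
        | succ u => simpa using (hPq u).1
      · intro j i; exact hRp j i
      · intro j u
        induction u using Fin.cases with
        | zero => simpa using (hRG j).2
        | succ u => simpa using hRq j u
      · intro w i
        induction w using Fin.cases with
        | zero => simpa using (hPp i).2
        | succ w => simpa using hSp w i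
      · intro w u
        induction w using Fin.cases with
        | zero =>
          induction u using Fin.cases with
          | zero => simp [hγy]
          | succ u => simp [(hPq u).2]
        | succ w =>
          induction u using Fin.cases with
          | zero => simp [(hSG w).2]
          | succ u =>
            simp only [Fin.cases_succ, Fin.val_succ]
            rw [hSq w u, decide_eq_decide]
            omega
      · intro i; exact hep i
      · intro u
        induction u using Fin.cases with
        | zero => simpa using heG.2
        | succ u => simpa using heq u

end TreeToHalfGraph

/-- If `H` shatters a Littlestone tree of depth `2^k`, then `H` contains a
half-graph of length `k`. -/
theorem tree_to_halfGraph {X : Type*} (H : Set (X → Bool)) (k : ℕ)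
    (ht : ShattersTree H (2 ^ k)) : HalfGraph H k := by
  obtain ⟨x, hx⟩ := ht
  have hS : TreeToHalfGraph.ShatP (fun _ : X => True) (2 ^ k) H :=
    TreeToHalfGraph.tree_to_shatP _ H x hx
  rcases k with _ | K
  · exact ⟨(Fin.elim0 : Fin 0 → X), (Fin.elim0 : Fin 0 → X → Bool),
      fun j => j.elim0, fun i _ => i.elim0⟩
  · have h2 : (2 : ℕ) ≤ 2 ^ (K + 1) := by
      calc (2 : ℕ) = 2 ^ 1 := (pow_one 2).symm
      _ ≤ 2 ^ (K + 1) := Nat.pow_le_pow_right (by norm_num) (by omega)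
    have hform : (2 : ℕ) ^ (K + 1) = (2 ^ (K + 1) - 1) + 1 := by omega
    rw [hform, TreeToHalfGraph.shatP_succ_iff] at hS
    obtain ⟨z, -, hz0, -⟩ := hS
    have hz0' : TreeToHalfGraph.ShatP (fun _ : X => True) (2 ^ (K + 1) - 2)
        {h ∈ H | h z = false} :=
      TreeToHalfGraph.shatP_of_le (by omega) hz0
    obtain ⟨c, v, hcv, p, R, q, S, e, hRG, hSG, heG, -, -, hRp, hRq, hSp, hSq, hep, heq⟩ :=
      TreeToHalfGraph.main_blk K {h ∈ H | h z = false} (fun _ => True) hz0'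
    refine ⟨(fun i => if hi : i.1 < c then p ⟨i.1, hi⟩
              else if hi2 : i.1 < K then q ⟨K - 1 - i.1, by omega⟩ else z),
            (fun j => if hj : j.1 < c then R ⟨j.1, hj⟩
              else if hj2 : j.1 = c then e else S ⟨K - j.1, by have := j.2; omega⟩),
            ?_, ?_⟩
    · intro j
      dsimp only
      split_ifs with ha hb
      · exact (hRG ⟨j.1, ha⟩).1
      · exact heG.1
      · exact (hSG _).1
    · intro i j
      have hiK := i.2
      have hjK := j.2
      dsimp only
      by_cases hj : j.1 < c
      · by_cases hi : i.1 < c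
        · simp only [dif_pos hj, dif_pos hi, hRp ⟨j.1, hj⟩ ⟨i.1, hi⟩]
          simp
        · by_cases hi2 : i.1 < K
          · simp only [dif_pos hj, dif_neg hi, dif_pos hi2, hRq]
            simp only [Bool.false_eq_true, false_iff]
            omega
          · simp only [dif_pos hj, dif_neg hi, dif_neg hi2, (hRG ⟨j.1, hj⟩).2]
            simp only [Bool.false_eq_true, false_iff]
            omega
      · by_cases hj2 : j.1 = c
        · by_cases hi : i.1 < c
          · simp only [dif_neg hj, dif_pos hj2, dif_pos hi, hep]
            simp only [true_iff]
            omega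
          · by_cases hi2 : i.1 < K
            · simp only [dif_neg hj, dif_pos hj2, dif_neg hi, dif_pos hi2, heq]
              simp only [Bool.false_eq_true, false_iff]
              omega
            · simp only [dif_neg hj, dif_pos hj2, dif_neg hi, dif_neg hi2, heG.2]
              simp only [Bool.false_eq_true, false_iff]
              omega
        · by_cases hi : i.1 < c
          · simp only [dif_neg hj, dif_neg hj2, dif_pos hi, hSp]
            simp only [true_iff]
            omega
          · by_cases hi2 : i.1 < K
            · simp only [dif_neg hj, dif_neg hj2, dif_neg hi, dif_pos hi2, hSq]
              simp only [decide_eq_true_eq]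
              omega
            · simp only [dif_neg hj, dif_neg hj2, dif_neg hi, dif_neg hi2,
                (hSG ⟨K - j.1, by have := j.2; omega⟩).2]
              simp only [Bool.false_eq_true, false_iff]
              omega
end

section
/- A hypothesis class H has finite Littlestone dimension if and only if H has finite threshold dimension (i.e., there is a finite bound on the length of half-graphs in H). -/
section Aux
variable {X : Type*}

def SubShat : ℕ → Set (X → Bool) → Set X → Prop
  | 0, H, _ => H.Nonempty
  | n+1, H, A => ∃ x ∈ A,
      SubShat n {h ∈ H | h x = false} A ∧ SubShat n {h ∈ H | h x = true} A

theorem SubShat.nonempty : ∀ {n : ℕ} {H : Set (X → Bool)} {A : Set X},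
    SubShat n H A → H.Nonempty
  | 0, _, _, h => h
  | n+1, H, A, ⟨x, _, h0, _⟩ => by
      obtain ⟨f, hf⟩ := SubShat.nonempty h0
      exact ⟨f, hf.1⟩

theorem SubShat.mono : ∀ {n : ℕ} {H H' : Set (X → Bool)} {A A' : Set X},
    SubShat n H A → H ⊆ H' → A ⊆ A' → SubShat n H' A'
  | 0, _, _, _, _, h, hH, _ => h.imp (fun f hf => hH hf)
  | n+1, H, H', A, A', ⟨x, hx, h0, h1⟩, hH, hA =>
      ⟨x, hA hx,
        SubShat.mono h0 (fun f hf => ⟨hH hf.1, hf.2⟩) hA,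
        SubShat.mono h1 (fun f hf => ⟨hH hf.1, hf.2⟩) hA⟩

theorem SubShat.down : ∀ {n : ℕ} {H : Set (X → Bool)} {A : Set X},
    SubShat (n+1) H A → SubShat n H A
  | 0, H, A, h => SubShat.nonempty h
  | n+1, H, A, ⟨x, hx, h0, h1⟩ => ⟨x, hx, SubShat.down h0, SubShat.down h1⟩

theorem SubShat.of_le {m n : ℕ} {H : Set (X → Bool)} {A : Set X}
    (h : m ≤ n) (hs : SubShat n H A) : SubShat m H A := by
  obtain ⟨k, rfl⟩ := Nat.exists_eq_add_of_le h
  clear h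
  induction k with
  | zero => exact hs
  | succ k ih => exact ih (SubShat.down hs)

theorem SubShat.prune : ∀ (n : ℕ) (a b : ℕ), a + b = n →
    ∀ (H : Set (X → Bool)) (A : Set X) (f : X → Bool), SubShat n H A →
    SubShat a H (A ∩ {x | f x = false}) ∨ SubShat b H (A ∩ {x | f x = true}) := by
  intro n
  induction n with
  | zero =>
    intro a b hab H A f hs
    obtain rfl : a = 0 := by omega
    exact Or.inl hs
  | succ n ih =>
    intro a b hab H A f hs
    match a, b with
    | 0, b => exact Or.inl (SubShat.nonempty hs)
    | a+1, 0 => exact Or.inr (SubShat.nonempty hs)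
    | a+1, b+1 =>
      obtain ⟨x, hxA, h0, h1⟩ := hs
      by_cases hfx : f x = true
      · -- split (a+1, b) on both subtrees
        have e : (a+1) + b = n := by omega
        rcases ih (a+1) b e _ A f h0 with c0 | c0
        · exact Or.inl (SubShat.mono c0 (fun g hg => hg.1) (fun y hy => hy))
        · rcases ih (a+1) b e _ A f h1 with c1 | c1
          · exact Or.inl (SubShat.mono c1 (fun g hg => hg.1) (fun y hy => hy))
          · exact Or.inr ⟨x, ⟨hxA, hfx⟩, c0, c1⟩
      · have hfx' : f x = false := by simp at hfx; exact hfx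
        have e : a + (b+1) = n := by omega
        rcases ih a (b+1) e _ A f h0 with c0 | c0
        · rcases ih a (b+1) e _ A f h1 with c1 | c1
          · exact Or.inl ⟨x, ⟨hxA, hfx'⟩, c0, c1⟩
          · exact Or.inr (SubShat.mono c1 (fun g hg => hg.1) (fun y hy => hy))
        · exact Or.inr (SubShat.mono c0 (fun g hg => hg.1) (fun y hy => hy))


theorem SubShat.zero_iff {H : Set (X → Bool)} {A : Set X} :
    SubShat 0 H A ↔ H.Nonempty := Iff.rfl

theorem SubShat.succ_iff {n : ℕ} {H : Set (X → Bool)} {A : Set X} :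
    SubShat (n+1) H A ↔ ∃ x ∈ A,
      SubShat n {h ∈ H | h x = false} A ∧ SubShat n {h ∈ H | h x = true} A := Iff.rfl

def Pfun : ℕ → ℕ
  | 0 => 0
  | m+1 => 2 * Pfun m + 2


/-- Key extraction: a deep shattered tree contains a "≤-ladder". -/
theorem ladder : ∀ (m : ℕ) (H : Set (X → Bool)) (A : Set X),
    SubShat (Pfun m) H A →
    ∃ (p : Fin m → X) (g : Fin m → X → Bool),
      (∀ j, g j ∈ H) ∧ (∀ i, p i ∈ A) ∧
      ∀ i j : Fin m, (g j (p i) = true ↔ i ≤ j) := by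
  intro m
  induction m with
  | zero =>
    intro H A _
    exact ⟨Fin.elim0, Fin.elim0, fun j => j.elim0, fun i => i.elim0, fun i => i.elim0⟩
  | succ m ih =>
    intro H A hs
    have hs' : SubShat (2 * Pfun m + 1 + 1) H A := hs
    rw [SubShat.succ_iff] at hs'
    obtain ⟨x, hxA, -, h1⟩ := hs'
    set H1 : Set (X → Bool) := {h ∈ H | h x = true} with hH1
    obtain ⟨f, hfH, hfx⟩ : ∃ f ∈ H, f x = true := by
      obtain ⟨f, hf⟩ := SubShat.nonempty h1; exact ⟨f, hf.1, hf.2⟩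
    have hsplit : Pfun m + (Pfun m + 1) = 2 * Pfun m + 1 := by ring
    rcases SubShat.prune _ (Pfun m) (Pfun m + 1) hsplit H1 A f h1 with hc | hc
    · -- f ≡ false on a depth-(Pfun m) subtree inside the true-side: prepend x
      obtain ⟨p, g, hgH, hpA, hiff⟩ := ih H1 (A ∩ {y | f y = false}) hc
      refine ⟨Fin.cons x p, Fin.cons f g, ?_, ?_, ?_⟩
      · intro j
        induction j using Fin.cases with
        | zero => simpa using hfH
        | succ j => simpa using (hgH j).1
      · intro i
        induction i using Fin.cases with
        | zero => simpa using hxA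
        | succ i => simpa using (hpA i).1
      · intro i j
        induction i using Fin.cases with
        | zero =>
          induction j using Fin.cases with
          | zero => simpa using hfx
          | succ j => simp [Fin.cons_zero, Fin.cons_succ, (hgH j).2]
        | succ i =>
          induction j using Fin.cases with
          | zero =>
            have hv : f (p i) = false := (hpA i).2
            simp [Fin.cons_succ, Fin.cons_zero, hv, Fin.le_def]
          | succ j => simpa [Fin.cons_succ, Fin.succ_le_succ_iff] using hiff i j
    · -- f ≡ true on a depth-(Pfun m + 1) subtree: append its root at the top
      rw [SubShat.succ_iff] at hc
      obtain ⟨y, hyA, k0, -⟩ := hc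
      obtain ⟨p, g, hgH, hpA, hiff⟩ := ih _ _ k0
      refine ⟨Fin.snoc p y, Fin.snoc g f, ?_, ?_, ?_⟩
      · intro j
        induction j using Fin.lastCases with
        | last => simpa using hfH
        | cast j => simpa using (hgH j).1.1
      · intro i
        induction i using Fin.lastCases with
        | last => simpa using hyA.1
        | cast i => simpa using (hpA i).1
      · intro i j
        induction i using Fin.lastCases with
        | last =>
          induction j using Fin.lastCases with
          | last => simpa using hyA.2
          | cast j =>
            have hv : g j y = false := (hgH j).2
            simp [Fin.snoc_castSucc, Fin.snoc_last, hv, Fin.le_def]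
        | cast i =>
          induction j using Fin.lastCases with
          | last =>
            have hv : f (p i) = true := (hpA i).2
            simp [Fin.snoc_castSucc, Fin.snoc_last, hv, Fin.le_def]
          | cast j =>
            simpa [Fin.snoc_castSucc, Fin.castSucc_le_castSucc_iff] using hiff i j

theorem shattersTree_to_subShat : ∀ (d : ℕ) (H : Set (X → Bool)),
    ShattersTree H d → SubShat d H Set.univ := by
  intro d
  induction d with
  | zero =>
    intro H ⟨x, hx⟩
    obtain ⟨h, hmem, -⟩ := hx Fin.elim0
    exact SubShat.zero_iff.mpr ⟨h, hmem⟩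
  | succ d ih =>
    intro H ⟨x, hx⟩
    have hzf : ∀ (f1 f2 : Fin ((0 : Fin (d+1)).1) → Bool), f1 = f2 := by
      intro f1 f2
      funext j
      exact absurd j.2 (by simp)
    set r : X := x 0 (fun _ => false) with hr
    have key : ∀ b : Bool, ShattersTree {h ∈ H | h r = b} d := by
      intro b
      refine ⟨fun k η => x k.succ (Fin.cons b η), fun ρ => ?_⟩
      obtain ⟨h, hmem, hreal⟩ := hx (Fin.cons b ρ)
      refine ⟨h, ⟨hmem, ?_⟩, ?_⟩
      · have h0 := hreal 0
        have e := hzf (fun _ => false)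
          (fun j : Fin ((0 : Fin (d+1)).1) => Fin.cons (α := fun _ : Fin (d+1) => Bool) b ρ ⟨j.1, j.2.trans (0 : Fin (d+1)).2⟩)
        rw [hr, e]
        simpa using h0
      · intro k
        have hk := hreal k.succ
        have harg : (Fin.cons (α := fun _ : Fin (k.1+1) => Bool) b
              (fun j : Fin k.1 => ρ ⟨j.1, j.2.trans k.2⟩))
            = (fun j : Fin ((k.succ : Fin (d+1)).1) =>
              Fin.cons (α := fun _ : Fin (d+1) => Bool) b ρ ⟨j.1, j.2.trans k.succ.2⟩) := by
          funext j
          obtain ⟨jv, hj⟩ := j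
          cases jv <;> simp [Fin.cons]
        rw [← harg] at hk
        simpa using hk
    rw [SubShat.succ_iff]
    exact ⟨r, Set.mem_univ _, ih _ (key false), ih _ (key true)⟩

theorem subShat_to_shattersTree : ∀ (d : ℕ) (H : Set (X → Bool)),
    SubShat d H Set.univ → ShattersTree H d := by
  intro d
  induction d with
  | zero =>
    intro H hs
    obtain ⟨h, hh⟩ := SubShat.zero_iff.mp hs
    exact ⟨fun k => k.elim0, fun ρ => ⟨h, hh, fun k => k.elim0⟩⟩
  | succ d ih =>
    intro H hs
    rw [SubShat.succ_iff] at hs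
    obtain ⟨x₀, -, s0, s1⟩ := hs
    obtain ⟨Tf, hTf⟩ := ih _ s0
    obtain ⟨Tt, hTt⟩ := ih _ s1
    set Tb : Bool → (k : Fin d) → (Fin k.1 → Bool) → X :=
      fun b => bif b then Tt else Tf with hTb
    refine ⟨fun k => Fin.cases (motive := fun k : Fin (d+1) => (Fin k.1 → Bool) → X)
      (fun _ => x₀) (fun k' η => Tb (η ⟨0, Nat.succ_pos _⟩) k' (fun j => η j.succ)) k, ?_⟩
    intro ρ
    have hT : ∀ b : Bool, ∃ h, (h ∈ H ∧ h x₀ = b) ∧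
        ∀ k' : Fin d, h (Tb b k' (fun j => Fin.tail ρ ⟨j.1, j.2.trans k'.2⟩))
          = Fin.tail ρ k' := by
      intro b
      cases b
      · obtain ⟨h, hmem, hreal⟩ := hTf (Fin.tail ρ)
        exact ⟨h, hmem, hreal⟩
      · obtain ⟨h, hmem, hreal⟩ := hTt (Fin.tail ρ)
        exact ⟨h, hmem, hreal⟩
    obtain ⟨h, hmem, hreal⟩ := hT (ρ 0)
    refine ⟨h, hmem.1, ?_⟩
    intro k
    induction k using Fin.cases with
    | zero => exact hmem.2
    | succ k' => exact hreal k'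

theorem halfGraph_to_subShat : ∀ (t : ℕ) (H : Set (X → Bool)) (m : ℕ),
    2^t ≤ m → HalfGraph H m → SubShat t H Set.univ := by
  intro t
  induction t with
  | zero =>
    intro H m hm ⟨x, h, hmem, hiff⟩
    exact SubShat.zero_iff.mpr ⟨h ⟨0, by omega⟩, hmem _⟩
  | succ t ih =>
    intro H m hm ⟨x, h, hmem, hiff⟩
    have h2 : 1 ≤ 2^t := Nat.one_le_two_pow
    have h21 : 2^(t+1) = 2 * 2^t := by ring
    have hc : 2^t - 1 < m := by omega
    set c : ℕ := 2^t - 1 with hcdef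
    set root : X := x ⟨c, hc⟩ with hroot
    rw [SubShat.succ_iff]
    refine ⟨root, Set.mem_univ _, ?_, ?_⟩
    · -- false side
      apply ih _ (2^t) le_rfl
      refine ⟨fun i => x ⟨i.1, by omega⟩, fun j => h ⟨j.1, by omega⟩, ?_, ?_⟩
      · intro j
        refine ⟨hmem _, ?_⟩
        have hj := j.2
        have hne : ¬ (h ⟨j.1, by omega⟩ (x ⟨c, hc⟩) = true) := by
          rw [hiff]
          simp only []
          omega
        rw [hroot]
        simpa using hne
      · intro i j
        simpa using hiff ⟨i.1, by omega⟩ ⟨j.1, by omega⟩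
    · -- true side
      apply ih _ (2^t) le_rfl
      refine ⟨fun i => x ⟨2^t + i.1, by omega⟩, fun j => h ⟨2^t + j.1, by omega⟩, ?_, ?_⟩
      · intro j
        refine ⟨hmem _, ?_⟩
        rw [hroot, hiff]
        simp only []
        omega
      · intro i j
        have := hiff ⟨2^t + i.1, by omega⟩ ⟨2^t + j.1, by omega⟩
        simp only [] at this ⊢
        rw [this]
        constructor <;> (intro hlt; simp at hlt ⊢; omega)

end Aux

/-- `H` has finite Littlestone dimension iff it has finite threshold dimension. -/
theorem finite_Ldim_iff_finite_threshold {X : Type*} (H : Set (X → Bool)) :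
    (∃ d : ℕ, ∀ t : ℕ, ShattersTree H t → t ≤ d) ↔
    (∃ k : ℕ, ∀ m : ℕ, HalfGraph H m → m ≤ k) := by
  constructor
  · rintro ⟨d, hd⟩
    refine ⟨2^(d+1), fun m hhg => ?_⟩
    by_contra hnot
    have hm : 2^(d+1) ≤ m := by omega
    have hs := halfGraph_to_subShat (d+1) H m hm hhg
    have := hd (d+1) (subShat_to_shattersTree (d+1) H hs)
    omega
  · rintro ⟨k, hk⟩
    refine ⟨Pfun (k+2), fun t hst => ?_⟩
    by_contra hnot
    have hs := shattersTree_to_subShat t H hst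
    have hs' : SubShat (Pfun (k+2)) H Set.univ := SubShat.of_le (by omega) hs
    obtain ⟨p, g, hgH, -, hiff⟩ := ladder (k+2) H Set.univ hs'
    have hhg : HalfGraph H (k+1) := by
      refine ⟨fun i => p i.succ, fun j => g j.castSucc, fun j => hgH _, ?_⟩
      intro i j
      rw [hiff]
      rw [Fin.le_def]
      simp only [Fin.val_succ, Fin.coe_castSucc]
      omega
    have := hk (k+1) hhg
    omega
end

section
/- If a class H satisfies the online Sauer-Shelah-Perles property with a cover of size strictly less than 2^n for sequences of length n, then H does not shatter a Littlestone tree of depth n. -/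
/-- `H` satisfies the online Sauer-Shelah-Perles property with cover size `m`
for sequences of length `n`: there are `m` online algorithms (maps from finite
sequences of points to predicted labels) covering every `H`-realizable labeled
sequence of length `n`. -/
def OnlineSSPCover {X : Type*} (H : Set (X → Bool)) (n m : ℕ) : Prop :=
  ∃ A : Fin m → (List X → Bool),
    ∀ (x : Fin n → X) (y : Fin n → Bool),
      (∃ h ∈ H, ∀ i : Fin n, h (x i) = y i) →
      ∃ j : Fin m, ∀ i : Fin n,
        A j (List.ofFn (fun t : Fin (i.1 + 1) => x ⟨t.1, lt_of_lt_of_le t.2 i.2⟩)) = y i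

/-- If `H` has an online SSP cover of size strictly less than `2^n` for
sequences of length `n`, then `H` does not shatter a Littlestone tree of
depth `n`. -/
theorem onlineSSP_bounds_tree {X : Type*} (H : Set (X → Bool)) (n m : ℕ)
    (hm : m < 2 ^ n) (hcov : OnlineSSPCover H n m) : ¬ ShattersTree H n := by
  rintro ⟨x, hx⟩
  obtain ⟨A, hA⟩ := hcov
  -- the sequence of points along branch ρ
  set xs : (Fin n → Bool) → Fin n → X :=
    fun ρ i => x i (fun j => ρ ⟨j.1, j.2.trans i.2⟩) with hxs
  have key : ∀ ρ : Fin n → Bool, ∃ j : Fin m, ∀ i : Fin n,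
      A j (List.ofFn (fun t : Fin (i.1 + 1) => xs ρ ⟨t.1, lt_of_lt_of_le t.2 i.2⟩)) = ρ i :=
    fun ρ => hA (xs ρ) ρ (hx ρ)
  choose f hf using key
  have finj : Function.Injective f := by
    intro ρ ρ' hρ
    by_contra hne
    have hex : ∃ i : Fin n, ρ i ≠ ρ' i := by
      by_contra hc
      push_neg at hc
      exact hne (funext hc)
    classical
    let S : Finset (Fin n) := Finset.univ.filter (fun i => ρ i ≠ ρ' i)
    have hSne : S.Nonempty := by
      obtain ⟨i, hi⟩ := hex
      exact ⟨i, by simp [S, hi]⟩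
    set i := S.min' hSne with hi
    have hiS : ρ i ≠ ρ' i := by
      have := S.min'_mem hSne
      simpa [S] using this
    have hmin : ∀ k : Fin n, k < i → ρ k = ρ' k := by
      intro k hk
      by_contra hkc
      have : i ≤ k := S.min'_le k (by simp [S, hkc])
      exact absurd hk (not_lt.2 this)
    -- the input lists agree at step i
    have hlist : List.ofFn (fun t : Fin (i.1 + 1) => xs ρ ⟨t.1, lt_of_lt_of_le t.2 i.2⟩)
        = List.ofFn (fun t : Fin (i.1 + 1) => xs ρ' ⟨t.1, lt_of_lt_of_le t.2 i.2⟩) := by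
      congr 1
      funext t
      simp only [hxs]
      congr 1
      funext s
      have hs : (⟨s.1, s.2.trans (lt_of_lt_of_le t.2 i.2)⟩ : Fin n) < i := by
        have h1 : s.1 < t.1 := s.2
        have h2 : t.1 ≤ i.1 := Nat.lt_succ_iff.mp t.2
        exact Fin.mk_lt_of_lt_val (lt_of_lt_of_le h1 h2)
      exact hmin _ hs
    have h1 := hf ρ i
    have h2 := hf ρ' i
    rw [hρ, hlist] at h1
    exact hiS (h1.symm.trans h2)
  have hcard : 2 ^ n ≤ m := by
    have := Fintype.card_le_of_injective f finj
    simpa using this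
  exact absurd hm (not_lt.2 hcard)
end
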